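/- Let C = {C_1,…,C_k} be a clustering of a finite set X ⊆ ℝ^m with centers μ_i and radii r(C_i), satisfying the γ-margin property, and let ε ≥ 0 with γ ≥ 1 + 2ε. If a point μ' ∈ ℝ^m satisfies d(μ', μ_i) ≤ ε·r(C_i), then for every x ∈ C_i and every y ∈ X \ C_i one has d(x, μ') < d(y, μ'). -/

import Mathlib

open Finset
open scoped Classical

/-- The center (mean) of a finite cluster of points in Euclidean space. -/
noncomputable def ctr {m : ℕ} (C : Finset (EuclideanSpace ℝ (Fin m))) : EuclideanSpace ℝ (Fin m) :=
  (C.card : ℝ)⁻¹ • ∑ x ∈ C, x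

/-- The radius of a cluster: the maximal distance of a member to the center. -/
noncomputable def rad {m : ℕ} (C : Finset (EuclideanSpace ℝ (Fin m))) : ℝ :=
  sSup ((fun x => dist x (ctr C)) '' (C : Set (EuclideanSpace ℝ (Fin m))))

/-- Confusion predicate for the (ν, ρ) local distance-weak oracle. -/
def LocalConfused {m k : ℕ} (Cl : Fin k → Finset (EuclideanSpace ℝ (Fin m))) (ν ρ : ℝ)
    (x y : EuclideanSpace ℝ (Fin m)) : Prop :=
  (∃ i j, i ≠ j ∧ x ∈ Cl i ∧ y ∈ Cl j ∧
    dist x y < (ν - 1) * min (dist x (ctr (Cl i))) (dist y (ctr (Cl j)))) ∨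
  (∃ i, x ∈ Cl i ∧ y ∈ Cl i ∧ 2 * ρ * rad (Cl i) < dist x y)

/-- Confusion predicate for the ρ global distance-weak oracle. -/
def GlobalConfused {m k : ℕ} (Cl : Fin k → Finset (EuclideanSpace ℝ (Fin m))) (ρ : ℝ)
    (x y : EuclideanSpace ℝ (Fin m)) : Prop :=
  (∃ i j, i ≠ j ∧ x ∈ Cl i ∧ y ∈ Cl j ∧
    (ρ * rad (Cl i) < dist x (ctr (Cl i)) ∨ ρ * rad (Cl j) < dist y (ctr (Cl j)))) ∨
  (∃ i, x ∈ Cl i ∧ y ∈ Cl i ∧ 2 * ρ * rad (Cl i) < dist x y)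

/-- Two points lie in the same cluster. -/
def SameCluster {m k : ℕ} (Cl : Fin k → Finset (EuclideanSpace ℝ (Fin m)))
    (x y : EuclideanSpace ℝ (Fin m)) : Prop :=
  ∃ i, x ∈ Cl i ∧ y ∈ Cl i

/-- The truthful (ν, ρ) local distance-weak oracle: answers 0 on confused pairs,
1 on same-cluster non-confused pairs, and -1 on different-cluster non-confused pairs. -/
noncomputable def localQ {m k : ℕ} (Cl : Fin k → Finset (EuclideanSpace ℝ (Fin m))) (ν ρ : ℝ)
    (x y : EuclideanSpace ℝ (Fin m)) : ℤ :=
  if LocalConfused Cl ν ρ x y then 0 else if SameCluster Cl x y then 1 else -1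

/-- The truthful ρ global distance-weak oracle. -/
noncomputable def globalQ {m k : ℕ} (Cl : Fin k → Finset (EuclideanSpace ℝ (Fin m))) (ρ : ℝ)
    (x y : EuclideanSpace ℝ (Fin m)) : ℤ :=
  if GlobalConfused Cl ρ x y then 0 else if SameCluster Cl x y then 1 else -1

/-! The margin at a point of `C_i` farthest from `μ_i` puts every `y ∉ C_i` at distance more than
`γ r(C_i)` from `μ_i`, while `C_i` lies within `r(C_i)` of it. Moving the center to `μ'` changes
both distances by at most `ε r(C_i)`, and `γ ≥ 1 + 2ε` absorbs the two shifts. -/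

section Radius

variable {m : ℕ} {C : Finset (EuclideanSpace ℝ (Fin m))}

lemma dist_ctr_le_rad {x : EuclideanSpace ℝ (Fin m)} (hx : x ∈ C) : dist x (ctr C) ≤ rad C :=
  le_csSup ((C.finite_toSet.image _).bddAbove) ⟨x, hx, rfl⟩

lemma exists_dist_ctr_eq_rad (hC : C.Nonempty) : ∃ x ∈ C, dist x (ctr C) = rad C :=
  (hC.to_set.image _).csSup_mem (C.finite_toSet.image _)

end Radius

lemma dist_lt_dist_of_dist_center_le {α : Type*} [PseudoMetricSpace α] {x y c c' : α}
    {r ε γ : ℝ} (hx : dist x c ≤ r) (hy : γ * r < dist y c) (hc' : dist c' c ≤ ε * r)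
    (hγ : 1 + 2 * ε ≤ γ) : dist x c' < dist y c' := by
  have hr : 0 ≤ r := dist_nonneg.trans hx
  calc dist x c' ≤ dist x c + dist c' c := dist_triangle_right x c' c
    _ ≤ (1 + 2 * ε) * r - dist c' c := by linarith
    _ ≤ γ * r - dist c' c := by gcongr
    _ < dist y c - dist c' c := by linarith
    _ ≤ dist y c' := by linarith [dist_triangle y c' c]

theorem stmt4_general {m k : ℕ} (X : Finset (EuclideanSpace ℝ (Fin m)))
    (Cl : Fin k → Finset (EuclideanSpace ℝ (Fin m)))
    (γ : ℝ)
    (hmargin : ∀ i, ∀ x ∈ Cl i, ∀ y ∈ X, y ∉ Cl i →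
      γ * dist x (ctr (Cl i)) < dist y (ctr (Cl i)))
    (ε : ℝ) (hγε : 1 + 2 * ε ≤ γ)
    (i : Fin k) (μ' : EuclideanSpace ℝ (Fin m))
    (hμ' : dist μ' (ctr (Cl i)) ≤ ε * rad (Cl i)) :
    ∀ x ∈ Cl i, ∀ y ∈ X, y ∉ Cl i → dist x μ' < dist y μ' := by
  intro x hx y hy hyC
  obtain ⟨z, hz, hz_rad⟩ := exists_dist_ctr_eq_rad ⟨x, hx⟩
  have hy_far : γ * rad (Cl i) < dist y (ctr (Cl i)) := hz_rad ▸ hmargin i z hz y hy hyC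
  exact dist_lt_dist_of_dist_center_le (dist_ctr_le_rad hx) hy_far hμ' hγε

/-- Under the γ-margin property with γ ≥ 1 + 2ε, if μ' satisfies
d(μ', μ_i) ≤ ε·r(C_i), then every x ∈ C_i is strictly closer to μ' than
every y ∈ X \ C_i. -/
theorem stmt4 {m k : ℕ} (X : Finset (EuclideanSpace ℝ (Fin m)))
    (Cl : Fin k → Finset (EuclideanSpace ℝ (Fin m)))
    (hsub : ∀ i, Cl i ⊆ X) (hne : ∀ i, (Cl i).Nonempty)
    (hpart : ∀ x ∈ X, ∃! i, x ∈ Cl i)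
    (γ : ℝ) (hγ : 1 ≤ γ)
    (hmargin : ∀ i, ∀ x ∈ Cl i, ∀ y ∈ X, y ∉ Cl i →
      γ * dist x (ctr (Cl i)) < dist y (ctr (Cl i)))
    (ε : ℝ) (hε : 0 ≤ ε) (hγε : 1 + 2 * ε ≤ γ)
    (i : Fin k) (μ' : EuclideanSpace ℝ (Fin m))
    (hμ' : dist μ' (ctr (Cl i)) ≤ ε * rad (Cl i)) :
    ∀ x ∈ Cl i, ∀ y ∈ X, y ∉ Cl i → dist x μ' < dist y μ' :=
  stmt4_general X Cl γ hmargin ε hγε i μ' hμ'
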